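/- Fix constants C, p > 1 and a bounded measurable set Ω ⊂ ℝⁿ of positive finite measure with finite diameter. Let X be a metric space and (f^k : Ω → X) a Lusin–Lipschitz admissible sequence with parameters λ_k = C·2^k and c_k = |Ω|·2^{−kp}: i.e. f^k is λ_k-Lipschitz and there are nonempty measurable sets E¹ ⊂ E² ⊂ ⋯ ⊂ Ω with |Ω \ E^k| ≤ c_k and f^{k+1} = f^k on E^k. Let f be the almost-everywhere pointwise limit and h_k = d(f, f^k). Then for every q with 1 < q < p, there is a constant C₀ (depending only on p, q, C and diam Ω) such that ∫_Ω h_k^q dz ≤ 2^{(q−p)k}·C₀ for every k, i.e. ‖h_k‖_{L^q(Ω)} decays geometrically in k. -/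

import Mathlib

open Filter MeasureTheory Set
open scoped ENNReal Topology

/-! The error `d(g, f^k)` vanishes on `E^k`. On the layer `E^{k+i+1} \ E^{k+i}` it equals
`d(f^{k+i+1}, f^k)`, and since these two maps agree on the nonempty set `E^k` it is at most
`(λ_{k+i+1} + λ_k) diam Ω ≤ 3C·2^{k+i}(diam Ω + 1)`. The layers exhaust `Ω` up to a null set and
the `i`-th one lies in `Ω \ E^{k+i}`, of measure at most `|Ω| 2^{-p(k+i)}`, so the integral is
bounded by a geometric series of ratio `2^{q-p} < 1` starting at its `k`-th term. -/

theorem eqOn_of_eqOn_succ {α X : Type*} {f : ℕ → α → X} {E : ℕ → Set α} (hE : Monotone E)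
    (hfE : ∀ k, EqOn (f (k + 1)) (f k) (E k)) {k m : ℕ} (hkm : k ≤ m) :
    EqOn (f m) (f k) (E k) := by
  induction m, hkm using Nat.le_induction with
  | base => exact eqOn_refl _ _
  | succ m hkm ih => exact fun z hz ↦ (hfE m (hE hkm hz)).trans (ih hz)

theorem dist_le_mul_diam_of_eq {α X : Type*} [PseudoMetricSpace α] [PseudoMetricSpace X]
    {Ω : Set α} (hΩ : Bornology.IsBounded Ω) {u v : α → X} {a b : ℝ} (ha : 0 ≤ a) (hb : 0 ≤ b)
    (hu : ∀ x ∈ Ω, ∀ y ∈ Ω, dist (u x) (u y) ≤ a * dist x y)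
    (hv : ∀ x ∈ Ω, ∀ y ∈ Ω, dist (v x) (v y) ≤ b * dist x y)
    {y : α} (hy : y ∈ Ω) (huv : u y = v y) {z : α} (hz : z ∈ Ω) :
    dist (u z) (v z) ≤ (a + b) * Metric.diam Ω := by
  have hdiam : dist z y ≤ Metric.diam Ω := Metric.dist_le_diam_of_mem hΩ hz hy
  calc dist (u z) (v z) ≤ dist (u z) (u y) + dist (v y) (v z) := by
        rw [huv]; exact dist_triangle _ _ _
    _ ≤ a * dist z y + b * dist y z := add_le_add (hu z hz y hy) (hv y hy z hz)
    _ ≤ (a + b) * Metric.diam Ω := by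
        rw [dist_comm y z, add_mul]; gcongr

theorem dist_le_mul_diam_of_eqOn_succ {α X : Type*} [PseudoMetricSpace α] [PseudoMetricSpace X]
    {Ω : Set α} (hΩ : Bornology.IsBounded Ω) {f : ℕ → α → X} {L : ℕ → ℝ} (hL : ∀ k, 0 ≤ L k)
    (hf : ∀ k, ∀ x ∈ Ω, ∀ y ∈ Ω, dist (f k x) (f k y) ≤ L k * dist x y)
    {E : ℕ → Set α} (hE : Monotone E) (hfE : ∀ k, EqOn (f (k + 1)) (f k) (E k))
    {k m : ℕ} (hkm : k ≤ m) (hEk : (E k).Nonempty) (hEΩ : E m ⊆ Ω)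
    {g : α → X} (hg : EqOn g (f m) (E m)) {z : α} (hz : z ∈ E m) :
    dist (g z) (f k z) ≤ (L m + L k) * Metric.diam Ω := by
  obtain ⟨y, hy⟩ := hEk
  rw [hg hz]
  exact dist_le_mul_diam_of_eq hΩ (hL m) (hL k) (hf m) (hf k) (hEΩ (hE hkm hy))
    (eqOn_of_eqOn_succ hE hfE hkm hy) (hEΩ hz)

namespace MeasureTheory

variable {α : Type*} [MeasurableSpace α] {μ : Measure α} {E : ℕ → Set α}

theorem ae_exists_mem_of_measure_compl_le {c : ℕ → ℝ≥0∞} (hc : Tendsto c atTop (𝓝 0))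
    (hE : ∀ i, μ (E i)ᶜ ≤ c i) : ∀ᵐ z ∂μ, ∃ i, z ∈ E i := by
  rw [ae_iff]
  refine le_antisymm (ge_of_tendsto' hc fun i ↦ ?_) zero_le
  exact (measure_mono fun z (hz : ¬∃ i, z ∈ E i) hzi ↦ hz ⟨i, hzi⟩).trans (hE i)

theorem lintegral_le_tsum_mul_measure_compl (hE : ∀ i, MeasurableSet (E i))
    (hcover : ∀ᵐ z ∂μ, ∃ i, z ∈ E i) {F : α → ℝ≥0∞} {B : ℕ → ℝ≥0∞}
    (hF₀ : ∀ z ∈ E 0, F z = 0) (hF : ∀ i, ∀ z ∈ E (i + 1) \ E i, F z ≤ B i) :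
    ∫⁻ z, F z ∂μ ≤ ∑' i, B i * μ (E i)ᶜ := by
  classical
  have hpoint : ∀ᵐ z ∂μ, F z ≤ ∑' i, (E i)ᶜ.indicator (fun _ ↦ B i) z := by
    filter_upwards [hcover] with z hz
    cases h : Nat.find hz with
    | zero => exact (hF₀ z (h ▸ Nat.find_spec hz)).trans_le zero_le
    | succ i =>
      have hzi : z ∉ E i := Nat.find_min hz (by omega)
      calc F z ≤ B i := hF i z ⟨h ▸ Nat.find_spec hz, hzi⟩
        _ = (E i)ᶜ.indicator (fun _ ↦ B i) z :=
          (indicator_of_mem (s := (E i)ᶜ) hzi fun _ ↦ B i).symm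
        _ ≤ _ := ENNReal.le_tsum i
  calc ∫⁻ z, F z ∂μ ≤ ∫⁻ z, ∑' i, (E i)ᶜ.indicator (fun _ ↦ B i) z ∂μ :=
        lintegral_mono_ae hpoint
    _ = ∑' i, B i * μ (E i)ᶜ := by
        rw [lintegral_tsum fun i ↦ (measurable_const.indicator (hE i).compl).aemeasurable]
        simp only [lintegral_indicator_const (hE _).compl]

end MeasureTheory

theorem ENNReal.tsum_ofReal_mul_pow_add {a r : ℝ} (ha : 0 ≤ a) (hr₀ : 0 ≤ r) (hr₁ : r < 1)
    (k : ℕ) :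
    ∑' i, ENNReal.ofReal (a * r ^ (k + i)) = ENNReal.ofReal (r ^ k * (a / (1 - r))) := by
  rw [← ENNReal.ofReal_tsum_of_nonneg (fun i ↦ by positivity)
    ((summable_geometric_of_lt_one hr₀ hr₁).mul_left (a * r ^ k) |>.congr fun i ↦ by ring)]
  simp only [pow_add, ← mul_assoc]
  rw [tsum_mul_left, tsum_geometric_of_lt_one hr₀ hr₁, div_eq_mul_inv]
  ring_nf

/-- Quantitative `L^q` convergence of a Lusin–Lipschitz admissible
sequence with parameters `λ_k = C·2^k`, `c_k = |Ω|·2^{-kp}` to its limit: for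
`1 < q < p` there is a constant `C₀` (depending only on `p, q, C` and `Ω`) such that
`∫_Ω d(f, f^k)^q ≤ 2^{(q-p)k}·C₀` for every `k`. -/
theorem lusin_lipschitz_Lq_decay {n : ℕ}
    (Ω : Set (EuclideanSpace ℝ (Fin n)))
    (hΩmeas : MeasurableSet Ω) (hΩb : Bornology.IsBounded Ω)
    (hΩpos : 0 < volume Ω) (hΩfin : volume Ω < ⊤)
    (C p q : ℝ) (hC : 1 < C) (hq : 1 < q) (hqp : q < p) :
    ∃ C₀ > (0 : ℝ), ∀ (X : Type) [MetricSpace X]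
      (f : ℕ → EuclideanSpace ℝ (Fin n) → X)
      (E : ℕ → Set (EuclideanSpace ℝ (Fin n)))
      (g : EuclideanSpace ℝ (Fin n) → X),
      (∀ k, MeasurableSet (E k)) → (∀ k, (E k).Nonempty) →
      (∀ k, E k ⊆ E (k + 1)) → (∀ k, E k ⊆ Ω) →
      -- measure parameters: |Ω \ E^k| ≤ |Ω| · 2^{-kp}
      (∀ k : ℕ, volume (Ω \ E k) ≤ volume Ω * ENNReal.ofReal (2 ^ (-(p * k)))) →
      -- Lipschitz parameters: f^k is C·2^k-Lipschitz on Ω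
      (∀ k : ℕ, ∀ x ∈ Ω, ∀ y ∈ Ω, dist (f k x) (f k y) ≤ C * 2 ^ (k : ℕ) * dist x y) →
      (∀ k, Set.EqOn (f (k + 1)) (f k) (E k)) →
      -- g is the pointwise limit: it agrees with f^k on E^k
      (∀ k, Set.EqOn g (f k) (E k)) →
      ∀ k : ℕ,
        (∫⁻ z in Ω, ENNReal.ofReal (dist (g z) (f k z) ^ q) ∂volume)
          ≤ ENNReal.ofReal (2 ^ ((q - p) * k) * C₀) := by
  set D := Metric.diam Ω + 1
  set V := (volume Ω).toReal
  set s : ℝ := 2 ^ (-p)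
  set r : ℝ := 2 ^ (q - p)
  have hD : Metric.diam Ω ≤ D := le_add_of_nonneg_right zero_le_one
  have hV : 0 < V := ENNReal.toReal_pos hΩpos.ne' hΩfin.ne
  have hs : s < 1 := Real.rpow_lt_one_of_one_lt_of_neg one_lt_two (by linarith)
  have hr : r < 1 := Real.rpow_lt_one_of_one_lt_of_neg one_lt_two (by linarith)
  have hrs : 2 ^ q * s = r := by rw [← Real.rpow_add two_pos, ← sub_eq_add_neg]
  refine ⟨V * (3 * C * D) ^ q / (1 - r), div_pos (by positivity) (sub_pos.2 hr), ?_⟩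
  intro X _ f E g hEmeas hEne hEsucc hEΩ hvol hlip hfE hg k
  have hE : Monotone E := monotone_nat_of_le_succ hEsucc
  have hcompl (m : ℕ) : volume.restrict Ω (E m)ᶜ ≤ ENNReal.ofReal (V * s ^ m) := by
    rw [Measure.restrict_apply' hΩmeas, ← sdiff_eq_compl_inter, ENNReal.ofReal_mul hV.le,
      ENNReal.ofReal_toReal hΩfin.ne, ← Real.rpow_mul_natCast zero_le_two, neg_mul]
    exact hvol m
  have hcover : ∀ᵐ z ∂volume.restrict Ω, ∃ i, z ∈ E (k + i) := by
    have hlim : Tendsto (fun m ↦ ENNReal.ofReal (V * s ^ m)) atTop (𝓝 0) := by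
      simpa using ENNReal.tendsto_ofReal
        ((tendsto_pow_atTop_nhds_zero_of_lt_one (by positivity) hs).const_mul V)
    filter_upwards [ae_exists_mem_of_measure_compl_le hlim hcompl] with z ⟨i, hz⟩
    exact ⟨i, hE le_add_self hz⟩
  have hlayer (i : ℕ) (z) (hz : z ∈ E (k + (i + 1)) \ E (k + i)) :
      ENNReal.ofReal (dist (g z) (f k z) ^ q) ≤
        ENNReal.ofReal ((3 * C * D * 2 ^ (k + i)) ^ q) := by
    have hdist := dist_le_mul_diam_of_eqOn_succ hΩb (L := fun m ↦ C * 2 ^ m)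
      (fun m ↦ by positivity) hlip hE hfE le_self_add (hEne k) (hEΩ _) (hg _) hz.1
    have hgrowth : C * 2 ^ (k + (i + 1)) + C * 2 ^ k ≤ 3 * C * 2 ^ (k + i) := by
      have : (2 : ℝ) ^ k ≤ 2 ^ (k + i) := pow_le_pow_right₀ one_le_two le_self_add
      rw [← add_assoc, pow_succ]
      nlinarith
    gcongr
    calc _ ≤ _ := hdist
      _ ≤ 3 * C * 2 ^ (k + i) * D := mul_le_mul hgrowth hD Metric.diam_nonneg (by positivity)
      _ = _ := by ring
  calc (∫⁻ z in Ω, ENNReal.ofReal (dist (g z) (f k z) ^ q))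
      ≤ ∑' i, ENNReal.ofReal ((3 * C * D * 2 ^ (k + i)) ^ q) *
          volume.restrict Ω (E (k + i))ᶜ :=
        lintegral_le_tsum_mul_measure_compl (fun i ↦ hEmeas _) hcover
          (fun z hz ↦ by simp [hg k hz, Real.zero_rpow (by linarith : q ≠ 0)]) hlayer
    _ ≤ ∑' i, ENNReal.ofReal (V * (3 * C * D) ^ q * r ^ (k + i)) := by
        refine ENNReal.tsum_le_tsum fun i ↦ (mul_le_mul_right (hcompl _) _).trans_eq ?_
        rw [← ENNReal.ofReal_mul (by positivity), Real.mul_rpow (by positivity) (by positivity),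
          ← Real.rpow_pow_comm zero_le_two, ← hrs, mul_pow]
        ring_nf
    _ = ENNReal.ofReal (2 ^ ((q - p) * k) * (V * (3 * C * D) ^ q / (1 - r))) := by
        rw [ENNReal.tsum_ofReal_mul_pow_add (by positivity) (by positivity) hr,
          Real.rpow_mul_natCast zero_le_two]
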